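/- Let C be an increasing (m-1)-tuple of gap-length constraints and let v, w be strings with |v| = m ≤ |w| = n. Define L(i,j) for pairs with v[i] = w[j] as the maximum length p of a string s_p having matching embeddings into v[1:i] and w[1:j] satisfying C[1:p-1]. Then for any pair (i,j) with v[i] = w[j] and L(i,j) = p, and C[p] = (ℓ,u): for every (i'',j'') with i+ℓ+1 ≤ i'' ≤ i+u+1, j+ℓ+1 ≤ j'' ≤ j+u+1, i'' ≤ m, j'' ≤ n, and v[i''] = w[j''], it holds that L(i'',j'') ≥ p + 1. -/
import Mathlib


/-- An embedding of the string `u` into the string `w`: a strictly increasing map on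
positions `0, ..., |u|-1` that is letter-preserving. -/
def IsEmbedding {α : Type*} (u w : List α) (e : ℕ → ℕ) : Prop :=
  StrictMonoOn e (Set.Iio u.length) ∧ ∀ i < u.length, w[e i]? = u[i]?

/-- The gap length `g` lies in the constraint interval `c = (ℓ, u)`. -/
def inCon (g : ℕ) (c : ℕ × ℕ) : Prop := c.1 ≤ g ∧ g ≤ c.2

/-- Containment of constraint intervals: `(a,b) ⊆ (c,d)` iff `c ≤ a` and `b ≤ d`. -/
def ConSub (c d : ℕ × ℕ) : Prop := d.1 ≤ c.1 ∧ c.2 ≤ d.2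

/-- The embedding `e` of a string of length `k` satisfies the tuple `C` of gap-length
constraints (0-indexed: `C i` constrains the gap between positions `i` and `i+1`). -/
def SatGaps (k : ℕ) (C : ℕ → ℕ × ℕ) (e : ℕ → ℕ) : Prop :=
  ∀ i, i + 1 < k → inCon (e (i + 1) - e i - 1) (C i)

/-- `u` is a `C`-subsequence of `w`. -/
def CSubseq {α : Type*} (C : ℕ → ℕ × ℕ) (u w : List α) : Prop :=
  ∃ e : ℕ → ℕ, IsEmbedding u w e ∧ SatGaps u.length C e

def MatchAt {α : Type*} (C : ℕ → ℕ × ℕ) (s x : List α) (i : ℕ) : Prop :=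
  ∃ e : ℕ → ℕ, IsEmbedding s x e ∧ SatGaps s.length C e ∧ e (s.length - 1) = i

def Mmat {α : Type*} (C : ℕ → ℕ × ℕ) (v w : List α) (p i j : ℕ) : Prop :=
  ∃ s : List α, s.length = p ∧ MatchAt C s v i ∧ MatchAt C s w j

/-- An increasing tuple of gap-length constraints. -/
def IncreasingAll (C : ℕ → ℕ × ℕ) : Prop := ∀ i, ConSub (C i) (C (i + 1))


lemma matchAt_extend {α : Type*} (C : ℕ → ℕ × ℕ) (s x : List α) (i i'' : ℕ)
    (hs : 1 ≤ s.length) (h : MatchAt C s x i) (hi'' : i'' < x.length)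
    (hlow : i + (C (s.length - 1)).1 + 1 ≤ i'')
    (hhigh : i'' ≤ i + (C (s.length - 1)).2 + 1) :
    MatchAt C (s ++ [x[i'']'hi'']) x i'' := by
  obtain ⟨e, ⟨hmono, hlet⟩, hgap, hlast⟩ := h
  set q := s.length with hq
  have hlen : (s ++ [x[i'']'hi'']).length = q + 1 := by simp [hq]
  have hei : ∀ a, a < q → e a ≤ i := by
    intro a ha
    rcases lt_or_eq_of_le (Nat.le_sub_one_of_lt ha) with h | h
    · rw [← hlast]
      exact le_of_lt (hmono (Set.mem_Iio.mpr ha) (Set.mem_Iio.mpr (by omega)) h)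
    · rw [← hlast, h]
  refine ⟨fun k => if k < q then e k else i'', ⟨?_, ?_⟩, ?_, ?_⟩
  · intro a ha b hb hab
    rw [hlen] at ha hb
    simp only [Set.mem_Iio] at ha hb
    by_cases hbq : b < q
    · have haq : a < q := lt_trans hab hbq
      simp only
      rw [if_pos haq, if_pos hbq]
      exact hmono (Set.mem_Iio.mpr haq) (Set.mem_Iio.mpr hbq) hab
    · have hbq' : b = q := by omega
      have haq : a < q := by omega
      simp only
      rw [if_pos haq, hbq', if_neg (lt_irrefl q)]
      have := hei a haq
      omega
  · intro k hk
    rw [hlen] at hk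
    by_cases hkq : k < q
    · simp only
      rw [if_pos hkq, List.getElem?_append_left hkq]
      exact hlet k hkq
    · have : k = q := by omega
      subst this
      simp only
      rw [if_neg (lt_irrefl q), List.getElem?_append_right (le_refl q)]
      simp [List.getElem?_eq_getElem hi'', hq]
  · intro k hk
    rw [hlen] at hk
    by_cases hk1 : k + 1 < q
    · simp only
      rw [if_pos hk1, if_pos (lt_trans (Nat.lt_succ_self k) hk1)]
      exact hgap k hk1
    · have hk1' : k + 1 = q := by omega
      have hkk : k < q := by omega
      simp only
      rw [hk1', if_neg (lt_irrefl q), if_pos hkk]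
      have hek : e k = i := by rw [← hlast]; congr 1; omega
      rw [hek]
      have hqk : q - 1 = k := by omega
      rw [hqk] at hlow hhigh
      exact ⟨by omega, by omega⟩
  · simp only
    rw [hlen]
    simp

lemma matchAt_single {α : Type*} (C : ℕ → ℕ × ℕ) (x : List α) (i : ℕ) (hi : i < x.length)
    (c : α) (hc : c = x[i]'hi) : MatchAt C [c] x i := by
  refine ⟨fun _ => i, ⟨?_, ?_⟩, ?_, rfl⟩
  · intro a ha b hb hab
    simp only [List.length_singleton, Set.mem_Iio] at ha hb
    omega
  · intro k hk
    simp only [List.length_singleton] at hk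
    interval_cases k
    simp [List.getElem?_eq_getElem hi, hc]
  · intro k hk
    simp only [List.length_singleton] at hk
    omega

theorem stmt8 {α : Type*} (v w : List α) (C : ℕ → ℕ × ℕ) (hinc : IncreasingAll C)
    (L : ℕ → ℕ → ℕ)
    (hL : ∀ (i j : ℕ) (hi : i < v.length) (hj : j < w.length), v[i]'hi = w[j]'hj →
      IsGreatest {p | Mmat C v w p i j} (L i j))
    (i j p : ℕ) (hi : i < v.length) (hj : j < w.length) (hvw : v[i]'hi = w[j]'hj)
    (hp : L i j = p) :
    ∀ (i'' j'' : ℕ) (hi'' : i'' < v.length) (hj'' : j'' < w.length),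
      i + (C (p - 1)).1 + 1 ≤ i'' → i'' ≤ i + (C (p - 1)).2 + 1 →
      j + (C (p - 1)).1 + 1 ≤ j'' → j'' ≤ j + (C (p - 1)).2 + 1 →
      v[i'']'hi'' = w[j'']'hj'' → p + 1 ≤ L i'' j'' := by
  intro i'' j'' hi'' hj'' h1 h2 h3 h4 hvw''
  have hgr := hL i j hi hj hvw
  have hgr'' := hL i'' j'' hi'' hj'' hvw''
  have hp1 : 1 ≤ p := by
    rw [← hp]
    apply hgr.2
    exact ⟨[v[i]'hi], rfl, matchAt_single C v i hi _ rfl,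
      matchAt_single C w j hj _ hvw⟩
  obtain ⟨s, hslen, hmv, hmw⟩ : Mmat C v w p i j := by rw [← hp]; exact hgr.1
  have hs1 : 1 ≤ s.length := by omega
  have hsq : s.length - 1 = p - 1 := by omega
  have hv' : MatchAt C (s ++ [v[i'']'hi'']) v i'' :=
    matchAt_extend C s v i i'' hs1 hmv hi'' (by rw [hsq]; omega) (by rw [hsq]; omega)
  have hw' : MatchAt C (s ++ [v[i'']'hi'']) w j'' := by
    rw [hvw'']
    exact matchAt_extend C s w j j'' hs1 hmw hj'' (by rw [hsq]; omega) (by rw [hsq]; omega)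
  apply hgr''.2
  exact ⟨s ++ [v[i'']'hi''], by simp [hslen], hv', hw'⟩
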